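/- Every automorphism f of the algebra F_n^1 (n ≥ 3) has the form f(e_1) = a_1 e_1 + a_n e_n, f(e_2) = Σ_{k=2}^n b_k e_k, and f(e_i) = a_1^{i-2} Σ_{k=i}^n b_{k-i+2} e_k for 3 ≤ i ≤ n, with a_1 b_2 ≠ 0. -/

import Mathlib

/-!
Index from 0 as in `f1E`, and write `v = f e₀`, `w = f e₁`. The bracket is `[x, y] = y₀ • S x`,
where `S` shifts coordinates up by one and drops `x₀`, so `[x, x] = 0` reads `x₀ xⱼ = 0` for
`1 ≤ j ≤ n - 2`. Applying this to `v` and `w` (images of `[e₀, e₀] = [e₁, e₁] = 0`) and using that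
`f e₂ = [w, v] ≠ 0`, one gets `v₀ ≠ 0`, hence `v = v₀ e₀ + vₙ₋₁ eₙ₋₁`, and `w₀ = 0`. Then
`f eᵢ₊₁ = [f eᵢ, v] = v₀ • S (f eᵢ)` gives `f eᵢ = v₀ ^ (i - 1) • S^(i - 1) w`, and
`f eₙ₋₁ = v₀ ^ (n - 2) w₁ eₙ₋₁ ≠ 0` forces `w₁ ≠ 0`.
-/

/-- The bracket of the filiform Leibniz algebra `F_n^1` on `Fin n → ℂ`
(0-indexed: `[e i, e 0] = e (i+1)` for `1 ≤ i ≤ n-2`, other basis products zero). -/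
def f1Br (n : ℕ) (x y : Fin n → ℂ) : Fin n → ℂ :=
  fun k => if _ : 2 ≤ (k : ℕ) then
    y ⟨0, k.pos⟩ * x ⟨(k : ℕ) - 1, Nat.lt_of_le_of_lt (Nat.sub_le _ _) k.isLt⟩
  else 0

/-- Basis vectors: `f1E n i = e_{i+1}` (0-indexed). -/
def f1E (n : ℕ) (i : Fin n) : Fin n → ℂ := Pi.single i 1

section Bracket

variable {n : ℕ}

theorem f1Br_apply_of_two_le (x y : Fin n → ℂ) (k : Fin n) (hk : 2 ≤ (k : ℕ)) :
    f1Br n x y k = y ⟨0, k.pos⟩ * x ⟨k - 1, by omega⟩ := by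
  simp [f1Br, hk]

theorem f1Br_apply_of_lt_two (x y : Fin n → ℂ) (k : Fin n) (hk : (k : ℕ) < 2) :
    f1Br n x y k = 0 := by
  simp [f1Br, Nat.not_le.mpr hk]

theorem f1E_apply (i k : Fin n) : f1E n i k = if k = i then 1 else 0 :=
  Pi.single_apply ..

theorem f1Br_f1E_self (i : Fin n) : f1Br n (f1E n i) (f1E n i) = 0 := by
  ext k
  by_cases hk : 2 ≤ (k : ℕ)
  · rw [f1Br_apply_of_two_le _ _ _ hk, f1E_apply, f1E_apply, Pi.zero_apply]
    split_ifs <;> simp_all [Fin.ext_iff]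
    omega
  · exact f1Br_apply_of_lt_two _ _ _ (by omega)

theorem f1Br_f1E_f1E_zero (i : ℕ) (hi : 1 ≤ i) (hin : i + 1 < n) :
    f1Br n (f1E n ⟨i, by omega⟩) (f1E n ⟨0, by omega⟩) = f1E n ⟨i + 1, hin⟩ := by
  ext k
  by_cases hk : 2 ≤ (k : ℕ)
  · simp only [f1Br_apply_of_two_le _ _ _ hk, f1E_apply, Fin.ext_iff, if_true, one_mul]
    exact if_congr (by omega) rfl rfl
  · rw [f1Br_apply_of_lt_two _ _ _ (by omega), f1E_apply, if_neg]
    simp only [Fin.ext_iff]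
    omega

theorem apply_zero_mul_apply_eq_zero_of_f1Br_self {x : Fin n → ℂ} (hx : f1Br n x x = 0)
    (j : Fin n) (hj : 1 ≤ (j : ℕ)) (hjn : (j : ℕ) + 1 < n) : x ⟨0, j.pos⟩ * x j = 0 := by
  have h := congrFun hx ⟨j + 1, hjn⟩
  rwa [f1Br_apply_of_two_le _ _ _ (by simp; omega)] at h

theorem sum_filter_smul_f1E_apply (p : Fin n → Prop) [DecidablePred p] (c : Fin n → ℂ)
    (m : Fin n) : (∑ k ∈ Finset.univ.filter p, c k • f1E n k) m = if p m then c m else 0 := by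
  simp [f1E, Finset.sum_apply, Pi.single_apply]

theorem extend_val_apply (x : Fin n → ℂ) (m : ℕ) (hm : m < n) :
    Function.extend Fin.val x 0 m = x ⟨m, hm⟩ :=
  Fin.val_injective.extend_apply x 0 ⟨m, hm⟩

theorem eq_sum_filter_smul_f1E_of_apply_zero (x : Fin n → ℂ) (hn : 0 < n) (hx : x ⟨0, hn⟩ = 0) :
    x = ∑ k ∈ Finset.univ.filter (fun k : Fin n => 1 ≤ (k : ℕ)), x k • f1E n k := by
  ext m
  rw [sum_filter_smul_f1E_apply]
  split_ifs with hm
  · rfl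
  · rw [show m = ⟨0, hn⟩ from Fin.ext (Nat.lt_one_iff.mp (not_le.mp hm)), hx]

end Bracket

section Morphism

variable {n : ℕ} {F : Type*} [FunLike F (Fin n → ℂ) (Fin n → ℂ)] {f : F}

theorem map_f1E_succ (hf : ∀ x y, f (f1Br n x y) = f1Br n (f x) (f y))
    (i : ℕ) (hi : 1 ≤ i) (hin : i + 1 < n) :
    f (f1E n ⟨i + 1, hin⟩) = f1Br n (f (f1E n ⟨i, by omega⟩)) (f (f1E n ⟨0, by omega⟩)) := by
  rw [← hf, f1Br_f1E_f1E_zero i hi hin]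

theorem map_f1E_apply (hf : ∀ x y, f (f1Br n x y) = f1Br n (f x) (f y)) (hn : 1 < n)
    (hw₀ : f (f1E n ⟨1, hn⟩) ⟨0, by omega⟩ = 0) (i : ℕ) (hi : 1 ≤ i) (hin : i < n) (m : Fin n) :
    f (f1E n ⟨i, hin⟩) m = if i ≤ m then
      f (f1E n ⟨0, by omega⟩) ⟨0, by omega⟩ ^ (i - 1) *
        Function.extend Fin.val (f (f1E n ⟨1, hn⟩)) 0 (m - i + 1)
    else 0 := by
  induction i, hi using Nat.le_induction generalizing m with
  | base =>
    by_cases hm : 1 ≤ (m : ℕ)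
    · rw [if_pos hm, Nat.sub_add_cancel hm, extend_val_apply _ _ m.isLt, pow_zero, one_mul]
    · rw [if_neg hm, show m = ⟨0, by omega⟩ from Fin.ext (Nat.lt_one_iff.mp (not_le.mp hm)), hw₀]
  | succ p hp ih =>
    rw [map_f1E_succ hf p hp hin]
    by_cases hm : 2 ≤ (m : ℕ)
    · rw [f1Br_apply_of_two_le _ _ _ hm, ih (by omega)]
      by_cases hpm : p + 1 ≤ (m : ℕ)
      · rw [if_pos (by simp; omega), if_pos hpm,
          show (m : ℕ) - 1 - p + 1 = m - (p + 1) + 1 by omega, show p + 1 - 1 = p - 1 + 1 by omega,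
          pow_succ]
        ring
      · rw [if_neg (by simp; omega), if_neg hpm, mul_zero]
    · rw [f1Br_apply_of_lt_two _ _ _ (by omega), if_neg (by omega)]

variable [ZeroHomClass F (Fin n → ℂ) (Fin n → ℂ)]

theorem f1Br_map_f1E_self (hf : ∀ x y, f (f1Br n x y) = f1Br n (f x) (f y)) (i : Fin n) :
    f1Br n (f (f1E n i)) (f (f1E n i)) = 0 := by
  rw [← hf, f1Br_f1E_self, map_zero]

theorem map_f1E_ne_zero (hinj : Function.Injective f) (i : Fin n) : f (f1E n i) ≠ 0 :=
  (map_ne_zero_iff f hinj).mpr (by simp [f1E])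

theorem map_f1E_zero_apply_zero_ne_zero (hf : ∀ x y, f (f1Br n x y) = f1Br n (f x) (f y))
    (hinj : Function.Injective f) (hn : 2 < n) :
    f (f1E n ⟨0, by omega⟩) ⟨0, by omega⟩ ≠ 0 := by
  intro hv₀
  apply map_f1E_ne_zero hinj ⟨2, by omega⟩
  ext k
  rw [map_f1E_succ hf 1 le_rfl (by omega), Pi.zero_apply]
  by_cases hk : 2 ≤ (k : ℕ)
  · rw [f1Br_apply_of_two_le _ _ _ hk, hv₀, zero_mul]
  · exact f1Br_apply_of_lt_two _ _ _ (by omega)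

theorem map_f1E_zero_apply_eq_zero (hf : ∀ x y, f (f1Br n x y) = f1Br n (f x) (f y))
    (hinj : Function.Injective f) (hn : 2 < n) (j : Fin n) (hj : 1 ≤ (j : ℕ))
    (hjn : (j : ℕ) + 1 < n) : f (f1E n ⟨0, by omega⟩) j = 0 :=
  (mul_eq_zero.mp (apply_zero_mul_apply_eq_zero_of_f1Br_self (f1Br_map_f1E_self hf _) j hj hjn)
    ).resolve_left (map_f1E_zero_apply_zero_ne_zero hf hinj hn)

theorem map_f1E_one_apply_zero (hf : ∀ x y, f (f1Br n x y) = f1Br n (f x) (f y))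
    (hinj : Function.Injective f) (hn : 2 < n) :
    f (f1E n ⟨1, by omega⟩) ⟨0, by omega⟩ = 0 := by
  by_contra hw₀
  -- otherwise `[w, w] = 0` kills `w₁, …, wₙ₋₂`, and these are all that `f e₂ = [w, v]` sees
  apply map_f1E_ne_zero hinj ⟨2, by omega⟩
  ext k
  rw [map_f1E_succ hf 1 le_rfl (by omega), Pi.zero_apply]
  by_cases hk : 2 ≤ (k : ℕ)
  · have hw := apply_zero_mul_apply_eq_zero_of_f1Br_self (f1Br_map_f1E_self hf ⟨1, by omega⟩)
      ⟨k - 1, by omega⟩ (by simp; omega) (by simp; omega)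
    rw [f1Br_apply_of_two_le _ _ _ hk, (mul_eq_zero.mp hw).resolve_left hw₀, mul_zero]
  · exact f1Br_apply_of_lt_two _ _ _ (by omega)

theorem map_f1E_one_apply_one_ne_zero (hf : ∀ x y, f (f1Br n x y) = f1Br n (f x) (f y))
    (hinj : Function.Injective f) (hn : 2 < n) :
    f (f1E n ⟨1, by omega⟩) ⟨1, by omega⟩ ≠ 0 := by
  intro hw₁
  apply map_f1E_ne_zero hinj ⟨n - 1, by omega⟩
  ext m
  rw [map_f1E_apply hf (by omega) (map_f1E_one_apply_zero hf hinj hn) (n - 1) (by omega)]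
  split_ifs with hm
  · rw [show (m : ℕ) - (n - 1) + 1 = 1 by omega, extend_val_apply _ 1 (by omega), hw₁, mul_zero]
    rfl
  · rfl

theorem map_f1E_zero_eq (hf : ∀ x y, f (f1Br n x y) = f1Br n (f x) (f y))
    (hinj : Function.Injective f) (hn : 2 < n) :
    f (f1E n ⟨0, by omega⟩) = f (f1E n ⟨0, by omega⟩) ⟨0, by omega⟩ • f1E n ⟨0, by omega⟩ +
      f (f1E n ⟨0, by omega⟩) ⟨n - 1, by omega⟩ • f1E n ⟨n - 1, by omega⟩ := by
  ext m
  simp only [Pi.add_apply, Pi.smul_apply, f1E_apply, Fin.ext_iff, smul_eq_mul, mul_ite, mul_one,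
    mul_zero]
  split_ifs with h₀ hₙ hₙ
  · omega
  · rw [show m = ⟨0, by omega⟩ from Fin.ext h₀, add_zero]
  · rw [show m = ⟨n - 1, by omega⟩ from Fin.ext hₙ, zero_add]
  · rw [add_zero]
    exact map_f1E_zero_apply_eq_zero hf hinj hn m (by omega) (by omega)

end Morphism

/-- Every automorphism `f` of `F_n^1` satisfies `f(e_1) = a₁e_1 + aₙeₙ`,
`f(e_2) = ∑_{k=2}^n b_k e_k`, `f(e_i) = a₁^{i-2} ∑_{k=i}^n b_{k-i+2} e_k`
(1-based indices), with `a₁ b₂ ≠ 0`. -/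
theorem f1_automorphisms (n : ℕ) (hn : 3 ≤ n)
    (f : (Fin n → ℂ) ≃ₗ[ℂ] (Fin n → ℂ))
    (hf : ∀ x y, f (f1Br n x y) = f1Br n (f x) (f y)) :
    ∃ a₁ aₙ : ℂ, ∃ b : ℕ → ℂ, a₁ * b 2 ≠ 0 ∧
      f (f1E n ⟨0, by omega⟩) =
        a₁ • f1E n ⟨0, by omega⟩ + aₙ • f1E n ⟨n - 1, by omega⟩ ∧
      f (f1E n ⟨1, by omega⟩) =
        ∑ k ∈ Finset.univ.filter (fun k : Fin n => 1 ≤ (k : ℕ)),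
          b ((k : ℕ) + 1) • f1E n k ∧
      ∀ i : Fin n, 2 ≤ (i : ℕ) →
        f (f1E n i) = a₁ ^ ((i : ℕ) - 1) •
          ∑ k ∈ Finset.univ.filter (fun k : Fin n => (i : ℕ) ≤ (k : ℕ)),
            b ((k : ℕ) - (i : ℕ) + 2) • f1E n k := by
  have hw₀ := map_f1E_one_apply_zero hf f.injective hn
  refine ⟨f (f1E n ⟨0, by omega⟩) ⟨0, by omega⟩, f (f1E n ⟨0, by omega⟩) ⟨n - 1, by omega⟩,
    fun m => Function.extend Fin.val (f (f1E n ⟨1, by omega⟩)) 0 (m - 1), ?_,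
    map_f1E_zero_eq hf f.injective hn, ?_, ?_⟩
  · refine mul_ne_zero (map_f1E_zero_apply_zero_ne_zero hf f.injective hn) ?_
    convert map_f1E_one_apply_one_ne_zero hf f.injective hn using 1
    exact extend_val_apply _ 1 (by omega)
  · conv_lhs => rw [eq_sum_filter_smul_f1E_of_apply_zero _ (by omega) hw₀]
    simp only [Nat.add_sub_cancel, Fin.val_injective.extend_apply]
  · intro i hi
    ext m
    rw [map_f1E_apply hf (by omega) hw₀ i (by omega) i.isLt m, Pi.smul_apply,
      sum_filter_smul_f1E_apply]
    split_ifs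
    · simp only [smul_eq_mul, show (m : ℕ) - i + 2 - 1 = m - i + 1 by omega]
    · rw [smul_zero]
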